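/- Let G = (V,E) be a finite undirected unweighted graph and let v, u, w ∈ V with δ(v,w) ≥ δ(v,u). Let Q be a shortest v–u path in G on which x₁ appears strictly before x₂ (in the order along Q from v to u). If there exists a shortest v–w path in G−x₁ (a path in G−x₁ of length δ(v,w,x₁)) passing through x₂, then δ(v,w,x₁) ≥ δ(v,u,x₁). -/

import Mathlib

/-!
Cut `Q` at `x₂`. Its tail `Q₂` from `x₂` to `u` avoids `x₁`, since `x₁` comes earlier on the
path `Q`. As `Q` is a shortest path, `δ(v,x₂) + |Q₂| = δ(v,u) ≤ δ(v,w) ≤ δ(v,x₂) + δ(x₂,w)`, so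
`Q₂` is no longer than the tail of the given shortest `v`–`w` path in `G − x₁` from `x₂`.
Replacing that tail by `Q₂` gives a `v`–`u` walk in `G − x₁` of length at most `δ(v,w,x₁)`.
-/

open scoped ENNReal Classical

/-- The graph `G` with vertex `x` "failed": edges incident to `x` are removed,
so that walks in `G.avoid x` are exactly walks of `G` avoiding `x`
(for endpoints different from `x`). -/
def SimpleGraph.avoid {V : Type*} (G : SimpleGraph V) (x : V) : SimpleGraph V where
  Adj a b := G.Adj a b ∧ a ≠ x ∧ b ≠ x
  symm := ⟨fun _ _ h => ⟨h.1.symm, h.2.2, h.2.1⟩⟩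
  loopless := ⟨fun a h => G.loopless.irrefl a h.1⟩

/-- `δ(a,b,x)` : the distance (in `ℕ∞`) between `a` and `b` in `G − x`,
with the convention that it is `∞` if `a = x` or `b = x`. -/
noncomputable def davoid {V : Type*} (G : SimpleGraph V) (a b x : V) : ℕ∞ :=
  if a = x ∨ b = x then ⊤ else (G.avoid x).edist a b

/-- `δ(v,B)` : distance from `v` to the set `B`. -/
noncomputable def dset {V : Type*} (G : SimpleGraph V) (v : V) (B : Set V) : ℕ∞ :=
  ⨅ w ∈ B, G.edist v w

/-- `δ(v,B,x)` : distance from `v` to the set `B` in `G − x`. -/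
noncomputable def dsetAvoid {V : Type*} (G : SimpleGraph V) (v : V) (B : Set V) (x : V) : ℕ∞ :=
  ⨅ w ∈ B, davoid G v w x

/-- `Ball(v,A,B) = {w ∈ A : δ(v,w) < δ(v,B)}`. -/
def ball {V : Type*} (G : SimpleGraph V) (v : V) (A B : Set V) : Set V :=
  {w ∈ A | G.edist v w < dset G v B}

/-- `Ball^x(v,A,B) = {w ∈ A : δ(v,w,x) < δ(v,B,x)}`. -/
def ballAvoid {V : Type*} (G : SimpleGraph V) (v : V) (A B : Set V) (x : V) : Set V :=
  {w ∈ A | davoid G v w x < dsetAvoid G v B x}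

/-- `Ball^x(v,A,B,ε) = {w ∈ A : (1+ε)·δ(v,w,x) < δ(v,B,x)}`. -/
def ballTrunc {V : Type*} (G : SimpleGraph V) (v : V) (A B : Set V) (x : V) (ε : ℝ) : Set V :=
  {w ∈ A | ENNReal.ofReal (1 + ε) * (davoid G v w x : ℝ≥0∞) < (dsetAvoid G v B x : ℝ≥0∞)}

/-- `C^x(w,A,B,ε) = {v ∈ V : (1+ε)·δ(v,w,x) < δ(v,B,x)}`. -/
def clusterTrunc {V : Type*} (G : SimpleGraph V) (w : V) (B : Set V) (x : V) (ε : ℝ) : Set V :=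
  {v | ENNReal.ofReal (1 + ε) * (davoid G v w x : ℝ≥0∞) < (dsetAvoid G v B x : ℝ≥0∞)}

theorem List.Nodup.le_idxOf_of_mem_drop {α : Type*} [BEq α] [LawfulBEq α] {l : List α}
    (hl : l.Nodup) {n : ℕ} {a : α} (ha : a ∈ l.drop n) : n ≤ l.idxOf a := by
  obtain ⟨j, hj, rfl⟩ := List.mem_drop_iff_getElem.mp ha
  rw [hl.idxOf_getElem]
  omega

namespace SimpleGraph

variable {V : Type*} {G H : SimpleGraph V} {a b u v w x y : V}

theorem avoid_le (G : SimpleGraph V) (x : V) : G.avoid x ≤ G :=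
  fun _ _ h => h.1

theorem davoid_eq_top (h : a = x ∨ b = x) : davoid G a b x = ⊤ :=
  if_pos h

theorem davoid_eq_edist (ha : a ≠ x) (hb : b ≠ x) : davoid G a b x = (G.avoid x).edist a b :=
  if_neg (by tauto)

namespace Walk

def toAvoid (p : G.Walk a b) (h : x ∉ p.support) : (G.avoid x).Walk a b :=
  p.transfer (G.avoid x) fun e he => by
    induction e using Sym2.ind with
    | _ c d =>
      exact ⟨p.adj_of_mem_edges he,
        fun hc => h (hc ▸ p.fst_mem_support_of_mem_edges he),
        fun hd => h (hd ▸ p.snd_mem_support_of_mem_edges he)⟩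

@[simp]
theorem length_toAvoid (p : G.Walk a b) (h : x ∉ p.support) : (p.toAvoid h).length = p.length :=
  p.length_transfer _

theorem IsPath.notMem_support_dropUntil [DecidableEq V] {p : G.Walk a b} (hp : p.IsPath)
    (hy : y ∈ p.support) (hlt : p.support.idxOf x < p.support.idxOf y) :
    x ∉ (p.dropUntil y hy).support := by
  intro hx
  have hle : p.support.idxOf y ≤ p.length := by
    have := List.idxOf_lt_length_of_mem hy
    rw [length_support] at this
    omega
  rw [dropUntil_eq_drop, support_copy, drop_support_eq_support_drop_min,
    min_eq_left hle] at hx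
  have := hp.support_nodup.le_idxOf_of_mem_drop hx
  omega

theorem edist_le_length_of_length_le_dropUntil [DecidableEq V] (p : H.Walk v w)
    (hy : y ∈ p.support) (q : H.Walk y u) (hq : q.length ≤ (p.dropUntil y hy).length) :
    H.edist v u ≤ p.length := by
  have hsplit := congrArg length (p.take_spec hy)
  rw [length_append] at hsplit
  refine ((p.takeUntil y hy).append q).edist_le.trans ?_
  rw [length_append]
  exact_mod_cast (by omega : (p.takeUntil y hy).length + q.length ≤ p.length)

theorem length_dropUntil_le_of_edist_le [DecidableEq V] (Q : G.Walk v u)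
    (hQ : (Q.length : ℕ∞) = G.edist v u) (hy : y ∈ Q.support) (hd : G.edist v u ≤ G.edist v w)
    (p : G.Walk y w) : (Q.dropUntil y hy).length ≤ p.length := by
  have hsplit := congrArg length (Q.take_spec hy)
  rw [length_append] at hsplit
  have hvy : G.edist v y ≤ (Q.takeUntil y hy).length := (Q.takeUntil y hy).edist_le
  have hfin : G.edist v y ≠ ⊤ := ne_top_of_le_ne_top (ENat.natCast_ne_top _) hvy
  have key : G.edist v y + (Q.dropUntil y hy).length ≤ G.edist v y + p.length :=
    calc G.edist v y + (Q.dropUntil y hy).length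
        ≤ (Q.takeUntil y hy).length + (Q.dropUntil y hy).length := add_le_add_left hvy _
      _ = Q.length := by exact_mod_cast hsplit
      _ = G.edist v u := hQ
      _ ≤ G.edist v w := hd
      _ ≤ G.edist v y + G.edist y w := G.edist_triangle
      _ ≤ G.edist v y + p.length := add_le_add_right p.edist_le _
  exact_mod_cast (ENat.add_le_add_iff_left hfin).mp key

end Walk

end SimpleGraph

open SimpleGraph Walk in
theorem stmt8_general {V : Type*} [DecidableEq V] (G : SimpleGraph V) (v u w : V)
    (hd : G.edist v u ≤ G.edist v w)
    (Q : G.Walk v u) (hQ : Q.IsPath) (hQlen : (Q.length : ℕ∞) = G.edist v u)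
    (x₁ x₂ : V) (hx₂ : x₂ ∈ Q.support)
    (horder : Q.support.idxOf x₁ < Q.support.idxOf x₂)
    (h : ∃ p : (G.avoid x₁).Walk v w, p.IsPath ∧ (p.length : ℕ∞) = davoid G v w x₁ ∧
      x₂ ∈ p.support) :
    davoid G v u x₁ ≤ davoid G v w x₁ := by
  obtain ⟨p, -, hplen, hx₂p⟩ := h
  have hv : v ≠ x₁ := by
    rintro rfl
    exact ENat.natCast_ne_top _ (hplen.trans (davoid_eq_top (.inl rfl)))
  have hQ₂ : x₁ ∉ (Q.dropUntil x₂ hx₂).support := hQ.notMem_support_dropUntil hx₂ horder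
  have hu : u ≠ x₁ := fun hu => hQ₂ (hu ▸ end_mem_support _)
  rw [davoid_eq_edist hv hu, ← hplen]
  refine edist_le_length_of_length_le_dropUntil p hx₂p ((Q.dropUntil x₂ hx₂).toAvoid hQ₂) ?_
  simpa using length_dropUntil_le_of_edist_le Q hQlen hx₂ hd
    ((p.dropUntil x₂ hx₂p).mapLe (avoid_le G x₁))

/-- with `δ(v,w) ≥ δ(v,u)`, `Q` a shortest `v`–`u` path on which `x₁`
appears strictly before `x₂`, if some shortest `v`–`w` path in `G − x₁` passes
through `x₂`, then `δ(v,w,x₁) ≥ δ(v,u,x₁)`. -/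
theorem stmt8 {V : Type*} [Fintype V] [DecidableEq V] (G : SimpleGraph V) (v u w : V)
    (hd : G.edist v u ≤ G.edist v w)
    (Q : G.Walk v u) (hQ : Q.IsPath) (hQlen : (Q.length : ℕ∞) = G.edist v u)
    (x₁ x₂ : V) (hx₁ : x₁ ∈ Q.support) (hx₂ : x₂ ∈ Q.support)
    (horder : Q.support.idxOf x₁ < Q.support.idxOf x₂)
    (h : ∃ p : (G.avoid x₁).Walk v w, p.IsPath ∧ (p.length : ℕ∞) = davoid G v w x₁ ∧
      x₂ ∈ p.support) :
    davoid G v u x₁ ≤ davoid G v w x₁ :=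
  stmt8_general G v u w hd Q hQ hQlen x₁ x₂ hx₂ horder h
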